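/- Let w_j, w_k, w_l, w_m, m_α, m_β be nonzero complex numbers and set A = w_m/(m_β·w_j), B = w_k/(m_α·w_j), C = (w_j·w_l)/(w_m·w_k). Assume ‖A‖ < 1, ‖B‖ < 1, ‖C‖ < 1, and that neither A nor B is a nonpositive real number. Define f : ℂ → ℂ by f(w) = Li₂(w_m/(m_β·w)) + Li₂(w_k/(m_α·w)) − Li₂(w_l/(m_β·w_k)) − Li₂(w_l/(m_α·w_m)) + Li₂((w·w_l)/(w_m·w_k)) − π²/6 + log(w_m/(m_β·w))·log(w_k/(m_α·w)). Then f has derivative D at w_j, where D = (1/w_j)·(log(1−A) + log(1−B) − log(1−C) − log A − log B), and moreover exp(w_j·D) = ((m_α·w_j − w_k)·(m_β·w_j − w_m))/(w_k·w_m − w_j·w_l). -/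

import Mathlib

/-!
Termwise differentiation of `Li₂(z) = ∑ zⁿ⁺¹/(n+1)²` gives `z · Li₂'(z) = -log (1 - z)` on the
unit disc. Each of `wₘ/(m_β w)`, `w_k/(m_α w)` and `w w_l/(wₘ w_k)` has logarithmic derivative
`∓1/w`, so every dilogarithm term of the potential contributes `±log (1 - ·)/w_j` and the product
of logarithms contributes `-(log A + log B)/w_j`. Exponentiating `w_j D` turns the sum of
logarithms into `(1 - A)(1 - B)/((1 - C) A B)`, which clears to `τ_{c,j}`.
-/

open Complex

/-- The dilogarithm, defined by the power series `Li₂(z) = ∑_{n ≥ 1} zⁿ / n²`. -/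
noncomputable def Li2 (z : ℂ) : ℂ := ∑' n : ℕ, z ^ (n + 1) / ((n : ℂ) + 1) ^ 2

theorem one_sub_ne_zero_of_norm_lt_one {R : Type*} [NormedRing R] [NormOneClass R] {a : R}
    (ha : ‖a‖ < 1) : 1 - a ≠ 0 :=
  sub_ne_zero.2 fun h => by simp [← h] at ha

theorem Complex.mem_slitPlane_of_forall_ofReal_ne {z : ℂ} (h : ∀ r : ℝ, r ≤ 0 → (r : ℂ) ≠ z) :
    z ∈ slitPlane := by
  rw [mem_slitPlane_iff_not_le_zero, nonpos_iff]
  rintro ⟨hre, him⟩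
  exact h z.re hre (ext rfl (by simp [him]))

theorem hasDerivAt_Li2 {z : ℂ} (hz : ‖z‖ < 1) :
    HasDerivAt Li2 (∑' n : ℕ, z ^ n / (n + 1)) z := by
  show HasDerivAt (fun w => ∑' n : ℕ, w ^ (n + 1) / ((n : ℂ) + 1) ^ 2) _ z
  obtain ⟨r, hzr, hr1⟩ := exists_between hz
  have hr0 : 0 ≤ r := (norm_nonneg z).trans hzr.le
  refine hasDerivAt_tsum_of_isPreconnected (u := fun n : ℕ => r ^ n) (y₀ := 0)
    (g := fun n w => w ^ (n + 1) / ((n : ℂ) + 1) ^ 2) (g' := fun n w => w ^ n / ((n : ℂ) + 1))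
    (summable_geometric_of_lt_one hr0 hr1) Metric.isOpen_ball
    (convex_ball (0 : ℂ) r).isPreconnected (fun n w _ => ?_) (fun n w hw => ?_)
    (Metric.mem_ball_self ((norm_nonneg z).trans_lt hzr)) ?_ (mem_ball_zero_iff.2 hzr)
  · have hn : (n : ℂ) + 1 ≠ 0 := Nat.cast_add_one_ne_zero n
    refine ((hasDerivAt_pow (n + 1) w).div_const (((n : ℂ) + 1) ^ 2)).congr_deriv ?_
    field_simp
    push_cast
    ring
  · have hn : (1 : ℝ) ≤ ‖(n : ℂ) + 1‖ := by
      rw [← Nat.cast_add_one, Complex.norm_natCast]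
      exact_mod_cast n.succ_pos
    calc ‖w ^ n / ((n : ℂ) + 1)‖ = ‖w‖ ^ n / ‖(n : ℂ) + 1‖ := by rw [norm_div, norm_pow]
      _ ≤ ‖w‖ ^ n := div_le_self (by positivity) hn
      _ ≤ r ^ n := by gcongr; exact (mem_ball_zero_iff.1 hw).le
  · simp

theorem mul_tsum_pow_div_succ {z : ℂ} (hz : ‖z‖ < 1) :
    z * ∑' n : ℕ, z ^ n / (n + 1) = -log (1 - z) := by
  rw [← (hasSum_taylorSeries_neg_log' hz).tsum_eq, ← tsum_mul_left]
  congr 1 with n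
  ring

/-- The chain rule for `Li₂ ∘ f` in terms of the logarithmic derivative `k` of `f`; in this form
it needs no `f x ≠ 0`. -/
theorem HasDerivAt.Li2 {f : ℂ → ℂ} {k x : ℂ} (hf : HasDerivAt f (k * f x) x) (hx : ‖f x‖ < 1) :
    HasDerivAt (fun y => Li2 (f y)) (-Complex.log (1 - f x) * k) x := by
  refine ((hasDerivAt_Li2 hx).comp x hf).congr_deriv ?_
  rw [← mul_tsum_pow_div_succ hx]
  ring

section

variable {𝕜 : Type*} [NontriviallyNormedField 𝕜] {x : 𝕜}

theorem hasDerivAt_const_div_const_mul (a b : 𝕜) (hx : x ≠ 0) :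
    HasDerivAt (fun y => a / (b * y)) (-x⁻¹ * (a / (b * x))) x := by
  simp_rw [div_mul_eq_div_div, div_eq_mul_inv (a / b)]
  refine ((hasDerivAt_inv hx).const_mul (a / b)).congr_deriv ?_
  ring

theorem hasDerivAt_mul_const_div_const (a b : 𝕜) (hx : x ≠ 0) :
    HasDerivAt (fun y => y * a / b) (x⁻¹ * (x * a / b)) x := by
  simp_rw [mul_div_assoc]
  refine (hasDerivAt_mul_const (a / b)).congr_deriv ?_
  field_simp

end

theorem crossing_potential_deriv_wj_pos_general
    (wj wk wl wm mα mβ : ℂ)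
    (hwj : wj ≠ 0) (hwk : wk ≠ 0) (hwm : wm ≠ 0)
    (hmα : mα ≠ 0) (hmβ : mβ ≠ 0)
    (A B C D : ℂ)
    (hA : A = wm / (mβ * wj)) (hB : B = wk / (mα * wj))
    (hC : C = (wj * wl) / (wm * wk))
    (hAnorm : ‖A‖ < 1) (hBnorm : ‖B‖ < 1) (hCnorm : ‖C‖ < 1)
    (hAreal : ∀ r : ℝ, r ≤ 0 → (r : ℂ) ≠ A)
    (hBreal : ∀ r : ℝ, r ≤ 0 → (r : ℂ) ≠ B)
    (hD : D = (1 / wj) * (Complex.log (1 - A) + Complex.log (1 - B) - Complex.log (1 - C)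
      - Complex.log A - Complex.log B)) :
    HasDerivAt (fun w : ℂ =>
      Li2 (wm / (mβ * w)) + Li2 (wk / (mα * w)) - Li2 (wl / (mβ * wk)) - Li2 (wl / (mα * wm))
        + Li2 ((w * wl) / (wm * wk)) - (Real.pi : ℂ) ^ 2 / 6
        + Complex.log (wm / (mβ * w)) * Complex.log (wk / (mα * w))) D wj ∧
    Complex.exp (wj * D) = ((mα * wj - wk) * (mβ * wj - wm)) / (wk * wm - wj * wl) := by
  have hAslit := mem_slitPlane_of_forall_ofReal_ne hAreal
  have hBslit := mem_slitPlane_of_forall_ofReal_ne hBreal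
  have hA0 := slitPlane_ne_zero hAslit
  have hB0 := slitPlane_ne_zero hBslit
  subst hA hB hC
  have hfA := hasDerivAt_const_div_const_mul wm mβ hwj
  have hfB := hasDerivAt_const_div_const_mul wk mα hwj
  have hfC := hasDerivAt_mul_const_div_const wl (wm * wk) hwj
  refine ⟨?_, ?_⟩
  · refine (((((((hfA.Li2 hAnorm).add (hfB.Li2 hBnorm)).sub_const _).sub_const _).add
      (hfC.Li2 hCnorm)).sub_const _).add ((hfA.clog hAslit).mul (hfB.clog hBslit))).congr_deriv ?_
    rw [hD]
    field_simp
    ring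
  · have hden : wk * wm - wj * wl ≠ 0 := by
      have := one_sub_ne_zero_of_norm_lt_one hCnorm
      contrapose! this
      rw [sub_eq_zero, eq_div_iff (mul_ne_zero hwm hwk)]
      linear_combination this
    rw [hD, ← mul_assoc, mul_one_div_cancel hwj, one_mul]
    simp only [exp_sub, exp_add, exp_log hA0, exp_log hB0,
      exp_log (one_sub_ne_zero_of_norm_lt_one hAnorm),
      exp_log (one_sub_ne_zero_of_norm_lt_one hBnorm),
      exp_log (one_sub_ne_zero_of_norm_lt_one hCnorm)]
    field_simp

/-- The crossing potential of a positive crossing, viewed as a function of the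
region variable `w_j`, has derivative `D` at `w_j`, and `exp (w_j * D) = τ_{c,j}`. -/
theorem crossing_potential_deriv_wj_pos
    (wj wk wl wm mα mβ : ℂ)
    (hwj : wj ≠ 0) (hwk : wk ≠ 0) (hwl : wl ≠ 0) (hwm : wm ≠ 0)
    (hmα : mα ≠ 0) (hmβ : mβ ≠ 0)
    (A B C D : ℂ)
    (hA : A = wm / (mβ * wj)) (hB : B = wk / (mα * wj))
    (hC : C = (wj * wl) / (wm * wk))
    (hAnorm : ‖A‖ < 1) (hBnorm : ‖B‖ < 1) (hCnorm : ‖C‖ < 1)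
    (hAreal : ∀ r : ℝ, r ≤ 0 → (r : ℂ) ≠ A)
    (hBreal : ∀ r : ℝ, r ≤ 0 → (r : ℂ) ≠ B)
    (hD : D = (1 / wj) * (Complex.log (1 - A) + Complex.log (1 - B) - Complex.log (1 - C)
      - Complex.log A - Complex.log B)) :
    HasDerivAt (fun w : ℂ =>
      Li2 (wm / (mβ * w)) + Li2 (wk / (mα * w)) - Li2 (wl / (mβ * wk)) - Li2 (wl / (mα * wm))
        + Li2 ((w * wl) / (wm * wk)) - (Real.pi : ℂ) ^ 2 / 6
        + Complex.log (wm / (mβ * w)) * Complex.log (wk / (mα * w))) D wj ∧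
    Complex.exp (wj * D) = ((mα * wj - wk) * (mβ * wj - wm)) / (wk * wm - wj * wl) :=
  crossing_potential_deriv_wj_pos_general wj wk wl wm mα mβ hwj hwk hwm hmα hmβ A B C D hA hB hC
    hAnorm hBnorm hCnorm hAreal hBreal hD
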